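/- arXiv:2102.12872 — 3 statements merged into one kernel-verified Lean document; each statement's English description precedes it below -/
import Mathlib

section
/- Fix a prime q, an integer d ≥ 2, t = ⌈2·log_q d + 2⌉, d distinct monic irreducible polynomials p_1, …, p_d of degree t over F = F_q, and a positive integer n. The set 𝓛 = { L_B(β) : (B, β) is a good pair } has size at most q^{4dt}. -/
/-!
For a monic `p` of degree `t`, the base-`q` digits of `r_p(f)` are the coefficients of the
base-`p` digits of `f`, read block by block; so `r_p(f)` lies in `[b/q^m, (b+1)/q^m)` iff its first
`m` digits spell `b`. Minimality of the canonical box `B` forces each side of `β` to refine the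
corresponding side of `B` by `c_i < t` further digits, all in block `k_i`. For `f = A + g·D` the
first `t·k_i` digits are those of `A`, and block `k_i` is `(A/p_i^{k_i} + g·D/p_i^{k_i}) mod p_i`.
Hence `L_B(β)` is determined by the tuples
`(c_i, b_i mod q^{c_i}, A/p_i^{k_i} mod p_i, D/p_i^{k_i} mod p_i)`, and there are at most
`(t·q^{3t})^d ≤ q^{4dt}` of them.
-/

open Finset Polynomial

/-- The value at `1/q` of a polynomial over `ZMod q`, with coefficients lifted to
`{0, 1, …, q−1} ⊆ ℝ`. -/
noncomputable def pev (q : ℕ) (g : Polynomial (ZMod q)) : ℝ :=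
  ∑ j ∈ Finset.range (g.natDegree + 1), ((g.coeff j).val : ℝ) / (q : ℝ) ^ j

/-- `r_p(f)`: writing `f = f₀ + f₁ p + f₂ p² + ⋯` in base `p` (each `fᵢ` of degree `< t`,
obtained as `(f /ₘ p^i) %ₘ p`), the real number
`(f₀(1/q) + f₁(1/q) q^(−t) + f₂(1/q) q^(−2t) + ⋯)/q`. -/
noncomputable def rp (q t : ℕ) (p f : Polynomial (ZMod q)) : ℝ :=
  (∑ i ∈ Finset.range (f.natDegree + 1), pev q ((f /ₘ p ^ i) %ₘ p) / (q : ℝ) ^ (i * t)) / q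

/-- The map `r : F[x] → [0,1)^d`, `r(f) = (r_{p 1}(f), …, r_{p d}(f))`. -/
noncomputable def rmap (q t d : ℕ) (p : Fin d → Polynomial (ZMod q))
    (f : Polynomial (ZMod q)) : Fin d → ℝ :=
  fun i => rp q t (p i) f

/-- The canonical box `∏ i, [a i / q^(t * k i), (a i + 1) / q^(t * k i))`. -/
def canonicalBox (q t d : ℕ) (k a : Fin d → ℕ) : Set (Fin d → ℝ) :=
  Set.univ.pi fun i =>
    Set.Ico ((a i : ℝ) / (q : ℝ) ^ (t * k i)) (((a i : ℝ) + 1) / (q : ℝ) ^ (t * k i))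

/-- A basic box in base `q` in `[0,1]^d` of volume `q^(-n)`. -/
def IsBasicBox (q d n : ℕ) (β : Set (Fin d → ℝ)) : Prop :=
  ∃ k a : Fin d → ℕ, (∀ i, a i + 1 ≤ q ^ k i) ∧ (∑ i, k i) = n ∧
    β = Set.univ.pi fun i =>
      Set.Ico ((a i : ℝ) / (q : ℝ) ^ k i) (((a i : ℝ) + 1) / (q : ℝ) ^ k i)

/-- A canonical box with parameter `t`, as a set. -/
def IsCanonicalBox (q t d : ℕ) (B : Set (Fin d → ℝ)) : Prop :=
  ∃ k a : Fin d → ℕ, (∀ i, a i + 1 ≤ q ^ (t * k i)) ∧ B = canonicalBox q t d k a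

/-- `(B, β)` is a good pair: `β` is a basic box of volume `q^(-n)` and `B` is the
smallest canonical box containing `β`. -/
def IsGoodPair (q t d n : ℕ) (B β : Set (Fin d → ℝ)) : Prop :=
  IsBasicBox q d n β ∧ IsCanonicalBox q t d B ∧ β ⊆ B ∧
    ∀ B' : Set (Fin d → ℝ), IsCanonicalBox q t d B' → β ⊆ B' → B ⊆ B'

/-- The polynomial obtained from `f` by setting the coefficients of
`x^0, x^1, …, x^(c-1)` to zero. -/
noncomputable def eraseLow (q : ℕ) (c : ℕ) (f : Polynomial (ZMod q)) : Polynomial (ZMod q) :=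
  ∑ j ∈ f.support.filter (fun j => c ≤ j), Polynomial.monomial j (f.coeff j)

namespace Polynomial

variable {R : Type*} [CommRing R] {p : R[X]}

theorem add_mul_divByMonic (hp : p.Monic) (f h : R[X]) : (f + p * h) /ₘ p = f /ₘ p + h := by
  nontriviality R
  exact (div_modByMonic_unique _ (f %ₘ p) hp
    ⟨by linear_combination modByMonic_add_div f p, degree_modByMonic_lt f hp⟩).1

theorem add_pow_mul_divByMonic_pow_modByMonic (hp : p.Monic) {i K : ℕ} (hiK : i < K)
    (f h : R[X]) : (f + p ^ K * h) /ₘ p ^ i %ₘ p = f /ₘ p ^ i %ₘ p := by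
  obtain ⟨c, rfl⟩ := Nat.exists_eq_add_of_lt hiK
  rw [pow_add, pow_add, pow_one, mul_assoc, mul_assoc, add_mul_divByMonic (hp.pow i)]
  exact modByMonic_eq_of_dvd_sub hp ⟨p ^ c * h, by ring⟩

theorem modByMonic_add_mul_modByMonic (hp : p.Monic) (u g w : R[X]) :
    (u %ₘ p + g * (w %ₘ p)) %ₘ p = (u + g * w) %ₘ p :=
  modByMonic_eq_of_dvd_sub hp ⟨-(u /ₘ p) - g * (w /ₘ p), by
    rw [modByMonic_eq_sub_mul_div u p, modByMonic_eq_sub_mul_div w p]; ring⟩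

end Polynomial

theorem Finset.sum_range_mul_eq_sum_sum {M : Type*} [AddCommMonoid M] (F : ℕ → M) (n t : ℕ) :
    ∑ k ∈ range (n * t), F k = ∑ i ∈ range n, ∑ j ∈ range t, F (i * t + j) := by
  induction n with
  | zero => simp
  | succ n ih => rw [sum_range_succ, ← ih, add_mul, one_mul, sum_range_add]

def digitsValue (q : ℕ) (δ : ℕ → ℕ) : ℕ → ℕ
  | 0 => 0
  | m + 1 => digitsValue q δ m * q + δ m

section DigitsValue

variable {q : ℕ} {δ δ' : ℕ → ℕ}

theorem digitsValue_add (m c : ℕ) :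
    digitsValue q δ (m + c) =
      digitsValue q δ m * q ^ c + digitsValue q (fun j => δ (m + j)) c := by
  induction c with
  | zero => simp [digitsValue]
  | succ c ih => rw [← add_assoc, digitsValue, ih, digitsValue]; ring

theorem digitsValue_lt (hδ : ∀ j, δ j < q) (m : ℕ) : digitsValue q δ m < q ^ m := by
  induction m with
  | zero => simp [digitsValue]
  | succ m ih =>
    calc digitsValue q δ m * q + δ m < (digitsValue q δ m + 1) * q := by linarith [hδ m]
      _ ≤ q ^ (m + 1) := by rw [pow_succ]; exact Nat.mul_le_mul_right q ih

theorem digitsValue_congr {m : ℕ} (h : ∀ j < m, δ j = δ' j) :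
    digitsValue q δ m = digitsValue q δ' m := by
  induction m with
  | zero => rfl
  | succ m ih =>
    rw [digitsValue, digitsValue, ih fun j hj => h j (by omega), h m (by omega)]

theorem cast_digitsValue_div_pow [NeZero q] (δ : ℕ → ℕ) (m : ℕ) :
    (digitsValue q δ m : ℝ) / (q : ℝ) ^ m =
      ∑ k ∈ range m, (δ k : ℝ) / (q : ℝ) ^ (k + 1) := by
  have hq : (q : ℝ) ≠ 0 := Nat.cast_ne_zero.2 (NeZero.ne q)
  induction m with
  | zero => simp [digitsValue]
  | succ m ih =>
    rw [sum_range_succ, ← ih, digitsValue]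
    push_cast
    field_simp
    ring

end DigitsValue

def adicIco (q m b : ℕ) : Set ℝ :=
  Set.Ico ((b : ℝ) / (q : ℝ) ^ m) (((b : ℝ) + 1) / (q : ℝ) ^ m)

section AdicIco

variable {q : ℕ}

theorem mem_adicIco_iff (hq : 0 < q) {x : ℝ} (hx : 0 ≤ x) (m b : ℕ) :
    x ∈ adicIco q m b ↔ ⌊x * (q : ℝ) ^ m⌋₊ = b := by
  have hqm : (0 : ℝ) < (q : ℝ) ^ m := by positivity
  rw [adicIco, Set.mem_Ico, Nat.floor_eq_iff (by positivity), div_le_iff₀ hqm, lt_div_iff₀ hqm]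

theorem div_pow_mem_adicIco (hq : 0 < q) (m b : ℕ) :
    (b : ℝ) / (q : ℝ) ^ m ∈ adicIco q m b :=
  (mem_adicIco_iff hq (by positivity) m b).2 <| by
    rw [div_mul_cancel₀ _ (by positivity), Nat.floor_natCast]

theorem mul_pow_eq_div_pow_sub {s m : ℕ} (hsm : s ≤ m) (hq : 0 < q) (x : ℝ) :
    x * (q : ℝ) ^ s = x * (q : ℝ) ^ m / ((q ^ (m - s) : ℕ) : ℝ) := by
  rw [← pow_sub_mul_pow (q : ℝ) hsm, Nat.cast_pow]
  field_simp

theorem adicIco_subset_iff (hq : 1 < q) {m s a b : ℕ} :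
    adicIco q m b ⊆ adicIco q s a ↔ s ≤ m ∧ b / q ^ (m - s) = a := by
  have hq0 : 0 < q := by omega
  have hqR : (1 : ℝ) < q := by exact_mod_cast hq
  constructor
  · intro h
    have hsm : s ≤ m := by
      obtain ⟨hlo, hhi⟩ := (Set.Ico_subset_Ico_iff (by
        rw [div_lt_div_iff_of_pos_right (by positivity)]; linarith)).1 h
      rw [add_div, add_div] at hhi
      have hlen : (1 : ℝ) / (q : ℝ) ^ m ≤ 1 / (q : ℝ) ^ s := by linarith
      exact (pow_le_pow_iff_right₀ hqR).1 (le_of_one_div_le_one_div (by positivity) hlen)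
    refine ⟨hsm, ?_⟩
    have hb := h (div_pow_mem_adicIco hq0 m b)
    rwa [mem_adicIco_iff hq0 (by positivity), mul_pow_eq_div_pow_sub hsm hq0,
      div_mul_cancel₀ _ (by positivity), Nat.floor_div_eq_div] at hb
  · rintro ⟨hsm, rfl⟩ x hx
    have hx0 : 0 ≤ x := le_trans (by positivity) hx.1
    rw [mem_adicIco_iff hq0 hx0] at hx ⊢
    rw [mul_pow_eq_div_pow_sub hsm hq0, Nat.floor_div_natCast, hx]

end AdicIco

theorem univ_pi_adicIco_subset_iff {q d : ℕ} (hq : 1 < q) {m b s a : Fin d → ℕ} :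
    (Set.univ.pi fun i => adicIco q (m i) (b i)) ⊆
        Set.univ.pi (fun i => adicIco q (s i) (a i)) ↔
      ∀ i, s i ≤ m i ∧ b i / q ^ (m i - s i) = a i := by
  rw [Set.univ_pi_subset_univ_pi_iff, or_iff_left fun ⟨i, hi⟩ =>
    (Set.nonempty_of_mem (div_pow_mem_adicIco (by omega) (m i) (b i))).ne_empty hi]
  exact forall_congr' fun i => adicIco_subset_iff hq

noncomputable def baseDigit (q t : ℕ) (p f : (ZMod q)[X]) (j : ℕ) : ℕ :=
  (((f /ₘ p ^ (j / t)) %ₘ p).coeff (j % t)).val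

section BaseDigit

variable {q t : ℕ} {p : (ZMod q)[X]}

theorem baseDigit_mul_add (f : (ZMod q)[X]) {r : ℕ} (hr : r < t) (K : ℕ) :
    baseDigit q t p f (t * K + r) = (((f /ₘ p ^ K) %ₘ p).coeff r).val := by
  rw [baseDigit, Nat.mul_add_div (by omega), Nat.mul_add_mod, Nat.div_eq_of_lt hr,
    Nat.mod_eq_of_lt hr, add_zero]

theorem baseDigit_eq_coeff_modByMonic (f : (ZMod q)[X]) {r : ℕ} (hr : r < t) :
    baseDigit q t p f r = ((f %ₘ p).coeff r).val := by
  simpa using baseDigit_mul_add (p := p) f hr 0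

theorem baseDigit_lt [NeZero q] (f : (ZMod q)[X]) (j : ℕ) : baseDigit q t p f j < q :=
  ZMod.val_lt _

theorem baseDigit_add_pow_mul (hp : p.Monic) (f h : (ZMod q)[X]) {K j : ℕ} (hj : j < t * K) :
    baseDigit q t p (f + p ^ K * h) j = baseDigit q t p f j := by
  have ht : 0 < t := Nat.pos_of_mul_pos_right (by omega : 0 < t * K)
  rw [baseDigit, baseDigit, add_pow_mul_divByMonic_pow_modByMonic hp
    ((Nat.div_lt_iff_lt_mul ht).2 (by rwa [mul_comm]))]

variable (hp : p.Monic) (hpt : p.natDegree = t) (ht : 0 < t)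
include hp hpt ht

theorem baseDigit_eq_zero (f : (ZMod q)[X]) {j : ℕ} (hj : (f.natDegree + 1) * t ≤ j) :
    baseDigit q t p f j = 0 := by
  have : Nontrivial (ZMod q) :=
    Nontrivial.of_polynomial_ne (p := p) (q := 0) fun h => by simp [h] at hpt; omega
  have hdiv : f /ₘ p ^ (j / t) = 0 := by
    rw [divByMonic_eq_zero_iff (hp.pow _), degree_eq_natDegree (hp.pow _).ne_zero,
      hp.natDegree_pow, hpt]
    refine degree_le_natDegree.trans_lt (WithBot.coe_lt_coe.2 ?_)
    have := (Nat.le_div_iff_mul_le ht).2 hj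
    nlinarith
  simp [baseDigit, hdiv]

theorem rp_eq_sum_baseDigit (f : (ZMod q)[X]) :
    rp q t p f = ∑ k ∈ range ((f.natDegree + 1) * t),
      (baseDigit q t p f k : ℝ) / (q : ℝ) ^ (k + 1) := by
  have hp1 : p ≠ 1 := fun h => by rw [h, natDegree_one] at hpt; omega
  rw [sum_range_mul_eq_sum_sum, rp, sum_div]
  refine sum_congr rfl fun i _ => ?_
  have hblock : ((f /ₘ p ^ i) %ₘ p).natDegree < t := hpt ▸ natDegree_modByMonic_lt _ hp hp1
  rw [pev, sum_subset (range_subset_range.2 hblock) fun j _ hj => by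
      rw [coeff_eq_zero_of_natDegree_lt (by simpa using hj)]; simp,
    sum_div, sum_div]
  refine sum_congr rfl fun j hj => ?_
  rw [mul_comm i t, baseDigit_mul_add f (mem_range.1 hj), div_div, div_div, ← pow_succ,
    ← pow_add]
  ring_nf

variable [NeZero q]

theorem rp_eq_digitsValue_div (f : (ZMod q)[X]) {M : ℕ} (hM : (f.natDegree + 1) * t ≤ M) :
    rp q t p f = (digitsValue q (baseDigit q t p f) M : ℝ) / (q : ℝ) ^ M := by
  rw [cast_digitsValue_div_pow, rp_eq_sum_baseDigit hp hpt ht,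
    sum_subset (range_subset_range.2 hM) fun k _ hk => by
      rw [baseDigit_eq_zero hp hpt ht f (by simpa using hk)]; simp]

theorem floor_rp_mul_pow (f : (ZMod q)[X]) (m : ℕ) :
    ⌊rp q t p f * (q : ℝ) ^ m⌋₊ = digitsValue q (baseDigit q t p f) m := by
  set N := (f.natDegree + 1) * t
  have hq : 0 < q := NeZero.pos q
  have hshift (x : ℝ) : x / (q : ℝ) ^ (m + N) * (q : ℝ) ^ m = x / ((q ^ N : ℕ) : ℝ) := by
    rw [pow_add, Nat.cast_pow]
    field_simp
  rw [rp_eq_digitsValue_div hp hpt ht f (Nat.le_add_left N m), hshift, Nat.floor_div_eq_div,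
    digitsValue_add, mul_comm, Nat.mul_add_div (by positivity),
    Nat.div_eq_of_lt (digitsValue_lt (fun j => baseDigit_lt f _) N), add_zero]

theorem rp_mem_adicIco_iff (f : (ZMod q)[X]) (m b : ℕ) :
    rp q t p f ∈ adicIco q m b ↔ digitsValue q (baseDigit q t p f) m = b := by
  have hnonneg : 0 ≤ rp q t p f := by
    rw [rp_eq_sum_baseDigit hp hpt ht]; positivity
  rw [mem_adicIco_iff (NeZero.pos q) hnonneg, floor_rp_mul_pow hp hpt ht]

end BaseDigit

theorem digitsValue_baseDigit_add_pow_mul_eq_iff {q t : ℕ} {p : (ZMod q)[X]} (hp : p.Monic)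
    {A h v : (ZMod q)[X]} {K c a b : ℕ} (hc : c < t) (hv : v %ₘ p = (A /ₘ p ^ K + h) %ₘ p)
    (hA : digitsValue q (baseDigit q t p A) (t * K) = a) (hb : b / q ^ c = a) :
    digitsValue q (baseDigit q t p (A + p ^ K * h)) (t * K + c) = b ↔
      digitsValue q (baseDigit q t p v) c = b % q ^ c := by
  have hlow : digitsValue q (baseDigit q t p (A + p ^ K * h)) (t * K) = a :=
    hA ▸ digitsValue_congr fun j hj => baseDigit_add_pow_mul hp A h hj
  have hblock : digitsValue q (fun r => baseDigit q t p (A + p ^ K * h) (t * K + r)) c =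
      digitsValue q (baseDigit q t p v) c := digitsValue_congr fun r hr => by
    rw [baseDigit_mul_add _ (hr.trans hc), baseDigit_eq_coeff_modByMonic _ (hr.trans hc), hv,
      add_mul_divByMonic (hp.pow K)]
  rw [digitsValue_add, hlow, hblock]
  conv_lhs => rw [← Nat.div_add_mod b (q ^ c), hb, mul_comm a]
  exact Nat.add_left_cancel_iff

theorem IsGoodPair.exists_eq_pi_adicIco {q t d n : ℕ} (hq : 1 < q) (ht : 0 < t)
    {k a : Fin d → ℕ} {β : Set (Fin d → ℝ)} (ha : ∀ i, a i + 1 ≤ q ^ (t * k i))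
    (hgood : IsGoodPair q t d n (canonicalBox q t d k a) β) :
    ∃ kβ aβ : Fin d → ℕ, β = (Set.univ.pi fun i => adicIco q (kβ i) (aβ i)) ∧
      ∀ i, t * k i ≤ kβ i ∧ kβ i < t * k i + t ∧ aβ i / q ^ (kβ i - t * k i) = a i := by
  obtain ⟨⟨kβ, aβ, haβ, -, rfl⟩, -, hsub, hmin⟩ := hgood
  have hcont := (univ_pi_adicIco_subset_iff hq).1 hsub
  refine ⟨kβ, aβ, rfl, fun i => ⟨(hcont i).1, ?_, (hcont i).2⟩⟩
  by_contra! hi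
  have hs : t * (k i + 1) ≤ kβ i := by rwa [mul_add, mul_one]
  set k' := Function.update k i (k i + 1) with hk'
  set a' := Function.update a i (aβ i / q ^ (kβ i - t * (k i + 1))) with ha'
  have hcanon : IsCanonicalBox q t d (canonicalBox q t d k' a') := by
    refine ⟨k', a', fun j => ?_, rfl⟩
    rcases eq_or_ne j i with rfl | hj
    · rw [hk', ha', Function.update_self, Function.update_self, Nat.add_one_le_iff,
        Nat.div_lt_iff_lt_mul (by positivity), ← pow_add, Nat.add_sub_cancel' hs]
      exact haβ j
    · rw [hk', ha', Function.update_of_ne hj, Function.update_of_ne hj]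
      exact ha j
  have hsub' : (Set.univ.pi fun j => adicIco q (kβ j) (aβ j)) ⊆ canonicalBox q t d k' a' := by
    refine (univ_pi_adicIco_subset_iff hq).2 fun j => ?_
    rcases eq_or_ne j i with rfl | hj
    · rw [hk', ha', Function.update_self, Function.update_self]
      exact ⟨hs, rfl⟩
    · rw [hk', ha', Function.update_of_ne hj, Function.update_of_ne hj]
      exact hcont j
  have hle := ((univ_pi_adicIco_subset_iff hq).1 (hmin _ hcanon hsub') i).1
  rw [hk', Function.update_self, mul_add, mul_one] at hle
  omega

abbrev DigitCondition (q t : ℕ) : Type :=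
  Fin t × Fin (q ^ t) × degreeLT (ZMod q) t × degreeLT (ZMod q) t

def digitConditionSet (q t d : ℕ) (p : Fin d → (ZMod q)[X])
    (C : Fin d → DigitCondition q t) : Set (ZMod q)[X] :=
  {g | ∀ i, digitsValue q (baseDigit q t (p i) ((C i).2.2.1 + g * (C i).2.2.2)) (C i).1 =
    (C i).2.1}

theorem setOf_rmap_mem_pi_adicIco_mem_range {q t d : ℕ} [NeZero q] {p : Fin d → (ZMod q)[X]}
    (hmonic : ∀ i, (p i).Monic) (hdeg : ∀ i, (p i).natDegree = t) (ht : 0 < t)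
    {k a kβ aβ : Fin d → ℕ} {A : (ZMod q)[X]} (hA : rmap q t d p A ∈ canonicalBox q t d k a)
    (hbounds : ∀ i,
      t * k i ≤ kβ i ∧ kβ i < t * k i + t ∧ aβ i / q ^ (kβ i - t * k i) = a i) :
    {g | rmap q t d p (A + g * ∏ i, p i ^ k i) ∈ Set.univ.pi fun i => adicIco q (kβ i) (aβ i)}
      ∈ Set.range (digitConditionSet q t d p) := by
  have hresidue (i : Fin d) (f : (ZMod q)[X]) : f %ₘ p i ∈ degreeLT (ZMod q) t := by
    have : Nontrivial (ZMod q) := Nontrivial.of_polynomial_ne (p := p i) (q := 0) fun h => by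
      have := hdeg i
      simp [h] at this
      omega
    rw [mem_degreeLT, ← hdeg i, ← degree_eq_natDegree (hmonic i).ne_zero]
    exact degree_modByMonic_lt f (hmonic i)
  refine ⟨fun i => (⟨kβ i - t * k i, by have := hbounds i; omega⟩,
    ⟨aβ i % q ^ (kβ i - t * k i), (Nat.mod_lt _ (pow_pos (NeZero.pos q) _)).trans_le
      (Nat.pow_le_pow_right (NeZero.pos q) (by have := hbounds i; omega))⟩,
    ⟨_, hresidue i (A /ₘ p i ^ k i)⟩,
    ⟨_, hresidue i (∏ j ∈ univ.erase i, p j ^ k j)⟩), ?_⟩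
  ext g
  simp only [digitConditionSet, Set.mem_ofPred_eq, Set.mem_univ_pi, rmap]
  refine forall_congr' fun i => ?_
  obtain ⟨hle, hlt, hdiv⟩ := hbounds i
  have hAi := (rp_mem_adicIco_iff (hmonic i) (hdeg i) ht A (t * k i) (a i)).1
    (Set.mem_univ_pi.1 hA i)
  have key := digitsValue_baseDigit_add_pow_mul_eq_iff (hmonic i) (by omega : kβ i - t * k i < t)
    (h := g * ∏ j ∈ univ.erase i, p j ^ k j)
    (modByMonic_add_mul_modByMonic (hmonic i) _ _ _) hAi hdiv
  rw [Nat.add_sub_cancel' hle] at key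
  rw [rp_mem_adicIco_iff (hmonic i) (hdeg i) ht, ← mul_prod_erase univ _ (mem_univ i),
    mul_left_comm, key]

theorem ncard_le_of_subset_range_digitConditionSet {q t d : ℕ} (hq : 1 < q)
    {p : Fin d → (ZMod q)[X]} {𝓛 : Set (Set (ZMod q)[X])}
    (h : 𝓛 ⊆ Set.range (digitConditionSet q t d p)) :
    𝓛.Finite ∧ 𝓛.ncard ≤ q ^ (4 * d * t) := by
  have : NeZero q := ⟨by omega⟩
  have : Finite (degreeLT (ZMod q) t) := .of_equiv _ (degreeLTEquiv (ZMod q) t).toEquiv.symm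
  have hcard : Nat.card (degreeLT (ZMod q) t) = q ^ t := by
    rw [Nat.card_congr (degreeLTEquiv (ZMod q) t).toEquiv, Nat.card_fun, Nat.card_zmod,
      Nat.card_eq_fintype_card, Fintype.card_fin]
  have hfin := Set.finite_range (digitConditionSet q t d p)
  refine ⟨hfin.subset h, (Set.ncard_le_ncard h hfin).trans ?_⟩
  rw [← Nat.card_coe_set_eq]
  refine (Finite.card_range_le _).trans ?_
  simp only [Nat.card_fun, Nat.card_prod, hcard, Nat.card_eq_fintype_card, Fintype.card_fin]
  calc (t * (q ^ t * (q ^ t * q ^ t))) ^ d ≤ (q ^ t * (q ^ t * (q ^ t * q ^ t))) ^ d := by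
        gcongr; exact (Nat.lt_pow_self hq).le
    _ = q ^ (4 * d * t) := by ring

theorem stmt11_general (q d t n : ℕ) [Fact q.Prime]
    (ht : t = ⌈2 * Real.log d / Real.log q + 2⌉₊)
    (p : Fin d → Polynomial (ZMod q))
    (hmonic : ∀ i, (p i).Monic)
    (hdeg : ∀ i, (p i).natDegree = t)
    (𝓛 : Set (Set (Polynomial (ZMod q))))
    (h𝓛 : 𝓛 = {L | ∃ (k a : Fin d → ℕ) (β : Set (Fin d → ℝ)) (A : Polynomial (ZMod q)),
      (∀ i, a i + 1 ≤ q ^ (t * k i)) ∧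
      IsGoodPair q t d n (canonicalBox q t d k a) β ∧
      A.degree < ((t * ∑ i, k i : ℕ) : WithBot ℕ) ∧
      rmap q t d p A ∈ canonicalBox q t d k a ∧
      L = {g : Polynomial (ZMod q) |
            rmap q t d p (A + g * ∏ i, p i ^ k i) ∈ β}}) :
    𝓛.Finite ∧ 𝓛.ncard ≤ q ^ (4 * d * t) := by
  have hq : 1 < q := (Fact.out : q.Prime).one_lt
  have ht0 : 0 < t := by
    have hlogd := Real.log_natCast_nonneg d
    have hlogq := Real.log_pos (Nat.one_lt_cast.2 hq)
    rw [ht]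
    exact Nat.one_le_ceil_iff.2 (by positivity)
  refine ncard_le_of_subset_range_digitConditionSet hq (p := p) ?_
  rw [h𝓛]
  rintro L ⟨k, a, β, A, ha, hgood, -, hA, rfl⟩
  obtain ⟨kβ, aβ, rfl, hbounds⟩ := hgood.exists_eq_pi_adicIco hq ht0 ha
  exact setOf_rmap_mem_pi_adicIco_mem_range hmonic hdeg ht0 hA hbounds

/-- Claim 1: the family `𝓛 = {L_B(β) : (B, β) a good pair}` has size at
most `q^(4dt)`. -/
theorem stmt11 (q d t n : ℕ) [Fact q.Prime] (hd : 2 ≤ d) (hn : 0 < n)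
    (ht : t = ⌈2 * Real.log d / Real.log q + 2⌉₊)
    (p : Fin d → Polynomial (ZMod q))
    (hmonic : ∀ i, (p i).Monic) (hirr : ∀ i, Irreducible (p i))
    (hdeg : ∀ i, (p i).natDegree = t) (hinj : Function.Injective p)
    (𝓛 : Set (Set (Polynomial (ZMod q))))
    (h𝓛 : 𝓛 = {L | ∃ (k a : Fin d → ℕ) (β : Set (Fin d → ℝ)) (A : Polynomial (ZMod q)),
      (∀ i, a i + 1 ≤ q ^ (t * k i)) ∧
      IsGoodPair q t d n (canonicalBox q t d k a) β ∧
      A.degree < ((t * ∑ i, k i : ℕ) : WithBot ℕ) ∧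
      rmap q t d p A ∈ canonicalBox q t d k a ∧
      L = {g : Polynomial (ZMod q) |
            rmap q t d p (A + g * ∏ i, p i ^ k i) ∈ β}}) :
    𝓛.Finite ∧ 𝓛.ncard ≤ q ^ (4 * d * t) :=
  stmt11_general q d t n ht p hmonic hdeg 𝓛 h𝓛
end

section
/- Fix a prime q, an integer d ≥ 2, t = ⌈2·log_q d + 2⌉, d distinct monic irreducible polynomials p_1, …, p_d of degree t over F = F_q, and a positive integer n with n ≥ 3dt. Let B be a canonical box with q^{−n} ≤ vol(B) ≤ q^{−n+dt−1} and type T(B) = (Ā(B), D̄(B)). Then for any polynomial h ∈ F[x] of degree < n + dt and any polynomial g ∈ F[x]: Ā(B) + g·D̄(B) ∈ h + P_{<n−dt} if and only if A(B) + g·D(B) ∈ h + P_{<n−dt}, where P_{<k} denotes the set of polynomials in F[x] of degree < k. -/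
open Finset Polynomial

/-!
`Ā` and `D̄` differ from `A` and `D = ∏ pᵢ^kᵢ` only in degrees `< n - dt` and `≤ n - 3dt`, and `D`
is monic of degree `N = t ∑ kᵢ > n - dt`. If `deg g < 2dt`, the difference
`(Ā - A) + g (D̄ - D)` has degree `< n - dt`, so the two memberships are equivalent. Otherwise
`A + g D` and `Ā + g D̄` both have the nonzero coefficient `lc g` in degree `deg g + N`, which exceeds
both `deg h` and `n - dt`, so neither lies in `h + P_{<n-dt}`.
-/

section Degree

variable {R : Type*} [CommRing R]

lemma exists_add_eq_iff_degree_sub_lt (X h : R[X]) (c : WithBot ℕ) :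
    (∃ f : R[X], f.degree < c ∧ X = h + f) ↔ (X - h).degree < c := by
  constructor
  · rintro ⟨f, hf, rfl⟩
    simpa using hf
  · intro hX
    exact ⟨X - h, hX, by ring⟩

lemma degree_sub_lt_iff_of_degree_sub_lt {X Y : R[X]} {c : WithBot ℕ} (hXY : (X - Y).degree < c)
    (h : R[X]) : (X - h).degree < c ↔ (Y - h).degree < c := by
  have hYX : (Y - X).degree < c := by rwa [← degree_neg, neg_sub]
  constructor
  · intro hX
    rw [show Y - h = (Y - X) + (X - h) by ring]
    exact (degree_add_le _ _).trans_lt (max_lt hYX hX)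
  · intro hY
    rw [show X - h = (X - Y) + (Y - h) by ring]
    exact (degree_add_le _ _).trans_lt (max_lt hXY hY)

lemma coeff_add_mul_natDegree_add {A D : R[X]} {N : ℕ} (hA : A.degree < N)
    (hD : D.natDegree ≤ N) (hDN : D.coeff N = 1) (g : R[X]) :
    (A + g * D).coeff (g.natDegree + N) = g.leadingCoeff := by
  rw [coeff_add, coeff_mul_add_eq_of_natDegree_le le_rfl hD, hDN, mul_one,
    coeff_eq_zero_of_degree_lt (hA.trans_le (by exact_mod_cast Nat.le_add_left N _)), zero_add,
    leadingCoeff]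

lemma degree_mul_lt_of_lt_of_le {f g : R[X]} {a b : ℕ} (hf : f.degree < a) (hg : g.degree ≤ b) :
    (f * g).degree < ↑(a + b) := by
  rcases eq_or_ne g 0 with rfl | hg0
  · simp
  · calc (f * g).degree ≤ f.degree + g.degree := degree_mul_le _ _
      _ < ↑a + ↑b := WithBot.add_lt_add_of_lt_of_le (degree_ne_bot.mpr hg0) hf hg
      _ = ↑(a + b) := by norm_cast

lemma not_degree_add_mul_sub_lt {A D g h : R[X]} {N : ℕ} {c : WithBot ℕ} (hA : A.degree < N)
    (hD : D.natDegree ≤ N) (hDN : D.coeff N = 1) (hg : g ≠ 0)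
    (hh : h.degree < ↑(g.natDegree + N)) (hc : c ≤ ↑(g.natDegree + N)) :
    ¬ (A + g * D - h).degree < c := by
  have hcoeff : (A + g * D - h).coeff (g.natDegree + N) ≠ 0 := by
    rw [coeff_sub, coeff_add_mul_natDegree_add hA hD hDN, coeff_eq_zero_of_degree_lt hh, sub_zero]
    exact leadingCoeff_ne_zero.mpr hg
  exact not_lt.mpr (hc.trans (le_degree_of_ne_zero hcoeff))

end Degree

section EraseLow

variable {q : ℕ}

lemma coeff_eraseLow (c : ℕ) (f : (ZMod q)[X]) (j : ℕ) :
    (eraseLow q c f).coeff j = if c ≤ j then f.coeff j else 0 := by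
  simp only [eraseLow, finsetSum_coeff, coeff_monomial, sum_ite_eq', mem_filter, mem_support_iff]
  split_ifs <;> simp_all

lemma degree_eraseLow_sub_lt (c : ℕ) (f : (ZMod q)[X]) : (eraseLow q c f - f).degree < c := by
  rw [degree_lt_iff_coeff_zero]
  intro j hj
  simp [coeff_eraseLow, hj]

lemma degree_eraseLow_le (c : ℕ) (f : (ZMod q)[X]) : (eraseLow q c f).degree ≤ f.degree := by
  rw [degree_le_iff_coeff_zero]
  intro j hj
  simp [coeff_eraseLow, coeff_eq_zero_of_degree_lt hj]

lemma degree_eraseLow_add_mul_sub_lt {g : (ZMod q)[X]} {b c e : ℕ} (hg : g.degree < b)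
    (hbc : b + e ≤ c) (A D : (ZMod q)[X]) :
    (eraseLow q c A + g * eraseLow q (e + 1) D - (A + g * D)).degree < c := by
  rw [show eraseLow q c A + g * eraseLow q (e + 1) D - (A + g * D)
    = (eraseLow q c A - A) + g * (eraseLow q (e + 1) D - D) by ring]
  have hD : (eraseLow q (e + 1) D - D).degree ≤ e :=
    Order.le_of_lt_succ (degree_eraseLow_sub_lt _ _)
  refine (degree_add_le _ _).trans_lt (max_lt (degree_eraseLow_sub_lt _ _) ?_)
  exact (degree_mul_lt_of_lt_of_le hg hD).trans_le (by exact_mod_cast hbc)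

end EraseLow

theorem stmt13_general (q d t n : ℕ)
    (hnt : 3 * d * t ≤ n)
    (p : Fin d → Polynomial (ZMod q))
    (hmonic : ∀ i, (p i).Monic)
    (hdeg : ∀ i, (p i).natDegree = t)
    (k : Fin d → ℕ)
    (hvol₁ : n - d * t + 1 ≤ t * ∑ i, k i)
    (A : Polynomial (ZMod q))
    (hA : A.degree < ((t * ∑ i, k i : ℕ) : WithBot ℕ))
    (h g : Polynomial (ZMod q)) (hh : h.degree < ((n + d * t : ℕ) : WithBot ℕ)) :
    (∃ f : Polynomial (ZMod q), f.degree < ((n - d * t : ℕ) : WithBot ℕ) ∧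
        eraseLow q (n - d * t) A + g * eraseLow q (n - 3 * d * t + 1) (∏ i, p i ^ k i)
          = h + f) ↔
    (∃ f : Polynomial (ZMod q), f.degree < ((n - d * t : ℕ) : WithBot ℕ) ∧
        A + g * (∏ i, p i ^ k i) = h + f) := by
  rw [mul_assoc] at hnt ⊢
  set D := ∏ i, p i ^ k i
  set N := t * ∑ i, k i
  have hDmonic : D.Monic := monic_prod_of_monic _ _ fun i _ => (hmonic i).pow _
  have hDdeg : D.natDegree = N := by
    rw [natDegree_prod_of_monic _ _ fun i _ => (hmonic i).pow _]
    simp only [N, fun i => (hmonic i).natDegree_pow, hdeg, mul_sum, mul_comm]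
  have hDN : D.coeff N = 1 := hDdeg ▸ hDmonic.coeff_natDegree
  simp only [exists_add_eq_iff_degree_sub_lt]
  rcases lt_or_ge g.degree ↑(2 * (d * t)) with hg | hg
  · exact degree_sub_lt_iff_of_degree_sub_lt
      (degree_eraseLow_add_mul_sub_lt hg (by omega) A D) h
  · have hg0 : g ≠ 0 := ne_zero_of_coe_le_degree hg
    have hgdeg : 2 * (d * t) ≤ g.natDegree := le_natDegree_of_coe_le_degree hg
    have hh' : h.degree < ↑(g.natDegree + N) := hh.trans_le (by exact_mod_cast (by omega))
    have hc : ((n - d * t : ℕ) : WithBot ℕ) ≤ ↑(g.natDegree + N) := by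
      exact_mod_cast (by omega)
    refine iff_of_false (not_degree_add_mul_sub_lt ?_ ?_ ?_ hg0 hh' hc)
      (not_degree_add_mul_sub_lt hA hDdeg.le hDN hg0 hh' hc)
    · exact (degree_eraseLow_le _ _).trans_lt hA
    · exact (natDegree_le_natDegree (degree_eraseLow_le _ _)).trans hDdeg.le
    · rw [coeff_eraseLow, if_pos (by omega), hDN]

/-- Claim 3: for a canonical box `B` with `q^(-n) ≤ vol(B) ≤ q^(-n+dt-1)`,
any `h` of degree `< n + dt` and any `g`, we have
`Ā(B) + g·D̄(B) ∈ h + P_{<n−dt}` iff `A(B) + g·D(B) ∈ h + P_{<n−dt}`. -/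
theorem stmt13 (q d t n : ℕ) [Fact q.Prime] (hd : 2 ≤ d) (hn : 0 < n)
    (ht : t = ⌈2 * Real.log d / Real.log q + 2⌉₊)
    (hnt : 3 * d * t ≤ n)
    (p : Fin d → Polynomial (ZMod q))
    (hmonic : ∀ i, (p i).Monic) (hirr : ∀ i, Irreducible (p i))
    (hdeg : ∀ i, (p i).natDegree = t) (hinj : Function.Injective p)
    (k a : Fin d → ℕ) (ha : ∀ i, a i + 1 ≤ q ^ (t * k i))
    (hvol₁ : n - d * t + 1 ≤ t * ∑ i, k i) (hvol₂ : t * ∑ i, k i ≤ n)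
    (A : Polynomial (ZMod q))
    (hA : A.degree < ((t * ∑ i, k i : ℕ) : WithBot ℕ))
    (hAB : rmap q t d p A ∈ canonicalBox q t d k a)
    (h g : Polynomial (ZMod q)) (hh : h.degree < ((n + d * t : ℕ) : WithBot ℕ)) :
    (∃ f : Polynomial (ZMod q), f.degree < ((n - d * t : ℕ) : WithBot ℕ) ∧
        eraseLow q (n - d * t) A + g * eraseLow q (n - 3 * d * t + 1) (∏ i, p i ^ k i)
          = h + f) ↔
    (∃ f : Polynomial (ZMod q), f.degree < ((n - d * t : ℕ) : WithBot ℕ) ∧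
        A + g * (∏ i, p i ^ k i) = h + f) :=
  stmt13_general q d t n hnt p hmonic hdeg k hvol₁ A hA h g hh
end

section
/- Let q ≥ 2, d ≥ 2, n, k be integers with 1 ≤ k ≤ d/2 and n ≥ 2k, let ε > 0, and let P ⊆ [0,1]^d be an (m, ε)-almost net in base q of size q^n·m. Let 𝓑 = [0, 1/q^{n−2k}) × [0,1)^{d−1}. For any two distinct k-element subsets J_1, J_2 of {1,…,d} and any τ ∈ {0,1,…,q−1}, the set B_τ = { v ∈ 𝓑 : ∑_{j∈J_1} X_j(v) − ∑_{j∈J_2} X_j(v) ≡ τ (mod q) } can be partitioned into q^{|J_1 Δ J_2|−1} basic boxes in base q, each of volume q^{−n+2k−|J_1 Δ J_2|}; consequently, |P ∩ B_τ| is between q^{2k−1}(1−ε)m and q^{2k−1}(1+ε)m. -/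
open Finset

/-- `P ⊆ [0,1]^d` is an `(m, ε)`-almost net in base `q`, of size `q ^ n * m`. -/
def IsAlmostNet (q d n : ℕ) (m ε : ℝ) (P : Finset (Fin d → ℝ)) : Prop :=
  (∀ x ∈ P, ∀ i, x i ∈ Set.Icc (0 : ℝ) 1) ∧
  (P.card : ℝ) = (q : ℝ) ^ n * m ∧
  ∀ β : Set (Fin d → ℝ), IsBasicBox q d n β →
    (1 - ε) * m ≤ (((P : Set (Fin d → ℝ)) ∩ β).ncard : ℝ) ∧
      (((P : Set (Fin d → ℝ)) ∩ β).ncard : ℝ) ≤ (1 + ε) * m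
/-- The `j`-th base-`q` digit of `x ∈ [0,1)`: if `x = (0.x₁x₂x₃…)_q` then
`digit q x j = x_j` (for `j ≥ 1`). -/
noncomputable def qdigit (q : ℕ) (x : ℝ) (j : ℕ) : ℕ :=
  (⌊x * (q : ℝ) ^ j⌋).toNat % q

/-- The box `𝓑 = [0, 1/q^(n−2k)) × [0,1)^(d−1)`. -/
def Bset (q d n k : ℕ) : Set (Fin d → ℝ) :=
  Set.univ.pi fun i =>
    if (i : ℕ) = 0 then Set.Ico (0 : ℝ) (1 / (q : ℝ) ^ (n - 2 * k)) else Set.Ico (0 : ℝ) 1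

/-- For `v ∈ 𝓑`: `X₁(v)` is the `(n−2k+1)`-st base-`q` digit of the first coordinate
(its first possibly nonzero digit), and `X_ℓ(v)` is the first digit of `v_ℓ` for `ℓ ≥ 2`. -/
noncomputable def Xfun (q d n k : ℕ) (v : Fin d → ℝ) (i : Fin d) : ℕ :=
  if (i : ℕ) = 0 then qdigit q (v i) (n - 2 * k + 1) else qdigit q (v i) 1

/-!
Write `S = J₁ ∆ J₂`. The congruence defining `B_τ` is `∑_{j ∈ S} ±X_j ≡ τ (mod q)`, a linear
equation in the digits `X_j`, `j ∈ S`, with unit coefficients, so it has `q^(|S|-1)` solutions.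
Prescribing the digits `X_j`, `j ∈ S`, cuts out of `𝓑` a basic box of volume `q^(-(n-2k+|S|))`,
and the boxes belonging to the solutions partition `B_τ`. A basic box of volume `q^(-(n-j))`
splits into `q^j` basic boxes of volume `q^(-n)`, each holding between `(1-ε)m` and `(1+ε)m`
points of `P`; summing over the `q^(|S|-1) · q^(2k-|S|)` boxes gives the bounds.
-/

open Function
open scoped symmDiff

lemma Int.ediv_natCast_eq_iff_exists_fin {q : ℕ} (hq : 0 < q) {z a : ℤ} :
    z / q = a ↔ ∃ r : Fin q, z = a * q + r := by
  constructor
  · rintro rfl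
    have hq' : (0 : ℤ) < q := by omega
    have hnonneg := Int.emod_nonneg z hq'.ne'
    have hlt := Int.emod_lt_of_pos z hq'
    refine ⟨⟨(z % q).toNat, by omega⟩, ?_⟩
    have := Int.emod_add_mul_ediv z q
    simp only [Int.toNat_of_nonneg hnonneg]
    linarith
  · rintro ⟨r, rfl⟩
    exact ((Int.ediv_emod_unique (r := (r : ℤ)) (q := a) (by omega)).2
      ⟨by ring, by positivity, by exact_mod_cast r.2⟩).1

def basicInterval (q t a : ℕ) : Set ℝ :=
  Set.Ico ((a : ℝ) / (q : ℝ) ^ t) (((a : ℝ) + 1) / (q : ℝ) ^ t)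

section BasicInterval

variable {q : ℕ}

lemma qdigit_lt (hq : 0 < q) (x : ℝ) (j : ℕ) : qdigit q x j < q :=
  Nat.mod_lt _ hq

lemma mem_basicInterval_iff_floor_eq (hq : 0 < q) {t a : ℕ} {x : ℝ} :
    x ∈ basicInterval q t a ↔ ⌊x * (q : ℝ) ^ t⌋ = a := by
  have hQ : (0 : ℝ) < (q : ℝ) ^ t := by positivity
  rw [basicInterval, Set.mem_Ico, div_le_iff₀ hQ, lt_div_iff₀ hQ, Int.floor_eq_iff]
  push_cast
  rfl

lemma basicInterval_zero (t : ℕ) : basicInterval q t 0 = Set.Ico 0 (1 / (q : ℝ) ^ t) := by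
  simp [basicInterval]

lemma pairwise_disjoint_basicInterval (hq : 0 < q) (t : ℕ) :
    Pairwise (Disjoint on basicInterval q t) := fun a b hab =>
  Set.disjoint_left.2 fun _ ha hb => hab <| by
    rw [mem_basicInterval_iff_floor_eq hq] at ha hb
    exact_mod_cast ha.symm.trans hb

lemma floor_mul_pow_eq_floor_mul_pow_succ_ediv (hq : 0 < q) (x : ℝ) (t : ℕ) :
    ⌊x * (q : ℝ) ^ t⌋ = ⌊x * (q : ℝ) ^ (t + 1)⌋ / q := by
  rw [← Int.floor_div_natCast, pow_succ, ← mul_assoc, mul_div_cancel_right₀ _ (by positivity)]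

lemma basicInterval_eq_iUnion (hq : 0 < q) (t a : ℕ) :
    basicInterval q t a = ⋃ r : Fin q, basicInterval q (t + 1) (a * q + r) := by
  ext x
  simp only [Set.mem_iUnion, mem_basicInterval_iff_floor_eq hq,
    floor_mul_pow_eq_floor_mul_pow_succ_ediv hq x t, Int.ediv_natCast_eq_iff_exists_fin hq]
  push_cast
  rfl

lemma mem_basicInterval_succ_iff_qdigit (hq : 0 < q) {t c : ℕ} (hc : c < q) {x : ℝ} :
    x ∈ basicInterval q (t + 1) c ↔ x ∈ basicInterval q t 0 ∧ qdigit q x (t + 1) = c := by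
  rw [mem_basicInterval_iff_floor_eq hq, mem_basicInterval_iff_floor_eq hq,
    floor_mul_pow_eq_floor_mul_pow_succ_ediv hq x t, Int.ediv_natCast_eq_iff_exists_fin hq, qdigit]
  constructor
  · intro h
    exact ⟨⟨⟨c, hc⟩, by simp [h]⟩, by simp [h, Nat.mod_eq_of_lt hc]⟩
  · rintro ⟨⟨r, hr⟩, rfl⟩
    simp [hr, Nat.mod_eq_of_lt r.2]

end BasicInterval

lemma Set.iUnion_univ_pi_update {ι κ : Type*} [DecidableEq ι] {α : ι → Type*}
    (F : ∀ i, Set (α i)) (i : ι) (G : κ → Set (α i)) :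
    ⋃ r, Set.univ.pi (update F i (G r)) = Set.univ.pi (update F i (⋃ r, G r)) := by
  ext x
  simp only [Set.mem_iUnion, Set.mem_univ_pi, forall_update_iff _ (fun j s => x j ∈ s),
    exists_and_right]

lemma IsBasicBox.exists_split {q d n : ℕ} (hq : 0 < q) (i₀ : Fin d) {β : Set (Fin d → ℝ)}
    (hβ : IsBasicBox q d n β) :
    ∃ γ : Fin q → Set (Fin d → ℝ), (∀ r, IsBasicBox q d (n + 1) (γ r)) ∧
      Pairwise (Disjoint on γ) ∧ ⋃ r, γ r = β := by
  obtain ⟨K, A, hA, rfl, rfl⟩ := hβ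
  set F : Fin d → Set ℝ := fun i => basicInterval q (K i) (A i)
  refine ⟨fun r => Set.univ.pi (update F i₀ (basicInterval q (K i₀ + 1) (A i₀ * q + r))),
    fun r => ⟨update K i₀ (K i₀ + 1), update A i₀ (A i₀ * q + r), fun i => ?_, ?_, ?_⟩,
    fun r r' hrr' => ?_, ?_⟩
  · rcases eq_or_ne i i₀ with rfl | hi
    · simp only [update_self, pow_succ]
      nlinarith [hA i, r.2]
    · simpa only [update_of_ne hi] using hA i
  · rw [sum_update_of_mem (mem_univ i₀), ← add_sum_erase _ _ (mem_univ i₀),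
      sdiff_singleton_eq_erase]
    ring
  · exact congrArg _ <| funext fun i =>
      (apply_update₂ (fun _ => basicInterval q) K A i₀ _ _ i).symm
  · refine Set.disjoint_univ_pi.2 ⟨i₀, ?_⟩
    simp only [update_self]
    exact pairwise_disjoint_basicInterval hq _ (by omega)
  · rw [Set.iUnion_univ_pi_update, ← basicInterval_eq_iUnion hq, update_eq_self]
    rfl

lemma ncard_inter_iUnion_mem_bounds {α ι : Type*} [Fintype ι] (P : Finset α) {γ : ι → Set α}
    (hγ : Pairwise (Disjoint on γ)) {L U : ℝ}
    (h : ∀ i, L ≤ ((P : Set α) ∩ γ i).ncard ∧ ((P : Set α) ∩ γ i).ncard ≤ U) :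
    Fintype.card ι * L ≤ ((P : Set α) ∩ ⋃ i, γ i).ncard ∧
      ((P : Set α) ∩ ⋃ i, γ i).ncard ≤ Fintype.card ι * U := by
  have hsum : ((P : Set α) ∩ ⋃ i, γ i).ncard = ∑ i, ((P : Set α) ∩ γ i).ncard := by
    rw [Set.inter_iUnion, Set.ncard_iUnion_of_finite (fun i => P.finite_toSet.inter_of_left _)
      (fun i j hij => (hγ hij).mono inf_le_right inf_le_right), finsum_eq_sum_of_fintype]
  rw [hsum, Nat.cast_sum, ← nsmul_eq_mul, ← nsmul_eq_mul, ← card_univ]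
  exact ⟨card_nsmul_le_sum _ _ _ fun i _ => (h i).1, sum_le_card_nsmul _ _ _ fun i _ => (h i).2⟩

lemma IsAlmostNet.ncard_inter_mem_bounds {q d n : ℕ} {m ε : ℝ} {P : Finset (Fin d → ℝ)}
    (hq : 0 < q) (i₀ : Fin d) (hP : IsAlmostNet q d n m ε P) (j : ℕ) {n' : ℕ}
    {β : Set (Fin d → ℝ)} (hβ : IsBasicBox q d n' β) (hj : n' + j = n) :
    (q : ℝ) ^ j * ((1 - ε) * m) ≤ ((P : Set (Fin d → ℝ)) ∩ β).ncard ∧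
      ((P : Set (Fin d → ℝ)) ∩ β).ncard ≤ (q : ℝ) ^ j * ((1 + ε) * m) := by
  induction j generalizing n' β with
  | zero =>
    subst hj
    simpa using hP.2.2 β hβ
  | succ j ih =>
    obtain ⟨γ, hγ, hdisj, rfl⟩ := hβ.exists_split hq i₀
    have := ncard_inter_iUnion_mem_bounds P hdisj fun r => ih (hγ r) (by omega)
    simpa only [Fintype.card_fin, pow_succ', mul_assoc] using this

lemma Finset.card_symmDiff_le {α : Type*} [DecidableEq α] (s t : Finset α) :
    (s ∆ t).card ≤ s.card + t.card :=
  (card_le_card symmDiff_le_sup).trans (card_union_le s t)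

lemma Finset.sum_sub_sum_eq_sum_symmDiff {α R : Type*} [DecidableEq α] [Ring R]
    (J₁ J₂ : Finset α) (x : α → R) :
    ∑ j ∈ J₁, x j - ∑ j ∈ J₂, x j = ∑ j ∈ J₁ ∆ J₂, (if j ∈ J₁ then 1 else -1) * x j := by
  rw [← sum_sdiff_sub_sum_sdiff, symmDiff_def, sup_eq_union, sum_union disjoint_sdiff_sdiff,
    sub_eq_add_neg, ← sum_neg_distrib]
  congr 1 <;> refine sum_congr rfl fun j hj => ?_
  · simp [(mem_sdiff.1 hj).1]
  · simp [(mem_sdiff.1 hj).2]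

lemma Nat.card_linear_equation_solutions {R ι : Type*} [CommRing R] [Fintype ι] [DecidableEq ι]
    (w : ι → R) {p : ι} (hp : IsUnit (w p)) (τ : R) :
    Nat.card {c : ι → R // ∑ i, w i * c i = τ} = Nat.card R ^ (Fintype.card ι - 1) := by
  have hsplit (c : ι → R) : ∑ i, w i * c i = w p * c p + ∑ i : {i // i ≠ p}, w i * c i :=
    Fintype.sum_eq_add_sum_subtype_ne _ p
  let extend (g : {i // i ≠ p} → R) (i : ι) : R :=
    if h : i = p then ↑hp.unit⁻¹ * (τ - ∑ j : {j // j ≠ p}, w j * g j) else g ⟨i, h⟩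
  have extend_ne (g : {i // i ≠ p} → R) (i : {i // i ≠ p}) : extend g i = g i := dif_neg i.2
  let e : {c : ι → R // ∑ i, w i * c i = τ} ≃ ({i // i ≠ p} → R) :=
    { toFun c i := c.1 i
      invFun g := ⟨extend g, by
        simp only [hsplit, extend_ne, extend, dif_pos, ← mul_assoc, hp.mul_val_inv, one_mul,
          sub_add_cancel]⟩
      left_inv c := by
        ext i
        by_cases hi : i = p
        · subst hi
          simp only [extend, dif_pos, Units.inv_mul_eq_iff_eq_mul, IsUnit.unit_spec, ← c.2,
            hsplit]
          ring
        · exact extend_ne (fun j => c.1 j) ⟨i, hi⟩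
      right_inv g := funext (extend_ne g) }
  rw [Nat.card_congr e, Nat.card_fun, Nat.card_eq_fintype_card (α := {i // i ≠ p}),
    Fintype.card_subtype_compl, Fintype.card_subtype_eq]

def digitCylinder (q : ℕ) {d : ℕ} (e : Fin d → ℕ) (S : Finset (Fin d)) (c : S → ℕ) :
    Set (Fin d → ℝ) :=
  Set.univ.pi fun i =>
    if h : i ∈ S then basicInterval q (e i + 1) (c ⟨i, h⟩) else basicInterval q (e i) 0

section DigitCylinder

variable {q d : ℕ} (e : Fin d → ℕ) (S : Finset (Fin d))

lemma isBasicBox_digitCylinder (hq : 0 < q) {c : S → ℕ} (hc : ∀ i, c i < q) :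
    IsBasicBox q d (∑ i, e i + S.card) (digitCylinder q e S c) := by
  refine ⟨fun i => e i + if i ∈ S then 1 else 0, fun i => if h : i ∈ S then c ⟨i, h⟩ else 0,
    fun i => ?_, ?_, ?_⟩
  · dsimp only
    split_ifs with h
    · rw [pow_succ]
      nlinarith [hc ⟨i, h⟩, Nat.one_le_pow (e i) q hq]
    · simpa using Nat.one_le_pow (e i) q hq
  · rw [sum_add_distrib, Fintype.sum_ite_mem, sum_const, smul_eq_mul, mul_one]
  · refine congrArg Set.univ.pi (funext fun i => ?_)
    by_cases h : i ∈ S <;> simp [basicInterval, h]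

lemma mem_digitCylinder_iff (hq : 0 < q) {c : S → ℕ} (hc : ∀ i, c i < q) {v : Fin d → ℝ} :
    v ∈ digitCylinder q e S c ↔
      (∀ i, v i ∈ basicInterval q (e i) 0) ∧ ∀ i : S, qdigit q (v i) (e i + 1) = c i := by
  have hcoord (i : Fin d) :
      v i ∈ (if h : i ∈ S then basicInterval q (e i + 1) (c ⟨i, h⟩)
          else basicInterval q (e i) 0) ↔
        v i ∈ basicInterval q (e i) 0 ∧ ∀ h : i ∈ S, qdigit q (v i) (e i + 1) = c ⟨i, h⟩ := by
    split_ifs with h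
    · simp only [mem_basicInterval_succ_iff_qdigit hq (hc ⟨i, h⟩), h, forall_true_left]
    · simp [h]
  simp only [digitCylinder, Set.mem_univ_pi, hcoord, forall_and, Subtype.forall]

lemma pairwise_disjoint_digitCylinder (hq : 0 < q) :
    Pairwise (Disjoint on digitCylinder q e S) := by
  intro c c' hcc'
  obtain ⟨⟨i, hi⟩, hne⟩ := ne_iff.1 hcc'
  refine Set.disjoint_univ_pi.2 ⟨i, ?_⟩
  simp only [dif_pos hi]
  exact pairwise_disjoint_basicInterval hq _ hne

end DigitCylinder

lemma exists_partition_digitCylinder {q d : ℕ} [NeZero q] (e : Fin d → ℕ) (S : Finset (Fin d))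
    (w : Fin d → ZMod q) {p : Fin d} (hp : p ∈ S) (hw : IsUnit (w p)) (τ : ZMod q) :
    ∃ boxes : Fin (q ^ (S.card - 1)) → Set (Fin d → ℝ),
      (∀ i, IsBasicBox q d (∑ i, e i + S.card) (boxes i)) ∧ Pairwise (Disjoint on boxes) ∧
      ⋃ i, boxes i = {v | (∀ i, v i ∈ basicInterval q (e i) 0) ∧
        ∑ i ∈ S, w i * (qdigit q (v i) (e i + 1) : ZMod q) = τ} := by
  have hq : 0 < q := Nat.pos_of_neZero q
  have hcard := Nat.card_linear_equation_solutions (fun i : S => w i) (p := ⟨p, hp⟩) hw τ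
  rw [Nat.card_zmod, Fintype.card_coe] at hcard
  let E := (Finite.equivFinOfCardEq hcard).symm
  let box (c : {c : S → ZMod q // ∑ i : S, w i * c i = τ}) :=
    digitCylinder q e S fun i => (c.1 i).val
  have hval_inj :
      Injective fun (c : {c : S → ZMod q // ∑ i : S, w i * c i = τ}) i => (c.1 i).val :=
    fun c c' h => Subtype.ext (funext fun i => ZMod.val_injective q (congrFun h i))
  refine ⟨box ∘ E, fun i => isBasicBox_digitCylinder e S hq fun _ => ZMod.val_lt _,
    ((pairwise_disjoint_digitCylinder e S hq).comp_of_injective hval_inj).comp_of_injective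
      E.injective, ?_⟩
  rw [show ⋃ i, (box ∘ E) i = ⋃ c, box c from E.surjective.iUnion_comp box]
  ext v
  simp only [Set.mem_iUnion, Set.mem_ofPred_eq, box, ← sum_coe_sort S,
    mem_digitCylinder_iff e S hq fun _ => ZMod.val_lt _]
  constructor
  · rintro ⟨c, hv, hdigit⟩
    refine ⟨hv, ?_⟩
    simp only [hdigit, ZMod.natCast_zmod_val, c.2]
  · rintro ⟨hv, hsum⟩
    refine ⟨⟨fun i => qdigit q (v i) (e i + 1), hsum⟩, hv, fun i => ?_⟩
    exact (ZMod.val_cast_of_lt (qdigit_lt hq _ _)).symm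

def bsetDepth (n k : ℕ) {d : ℕ} (i : Fin d) : ℕ :=
  if (i : ℕ) = 0 then n - 2 * k else 0

lemma Bset_eq_univ_pi (q d n k : ℕ) :
    Bset q d n k = Set.univ.pi fun i => basicInterval q (bsetDepth n k i) 0 := by
  refine congrArg Set.univ.pi (funext fun i => ?_)
  by_cases h : (i : ℕ) = 0 <;> simp [bsetDepth, basicInterval_zero, h]

lemma Xfun_eq_qdigit (q d n k : ℕ) (v : Fin d → ℝ) (i : Fin d) :
    Xfun q d n k v i = qdigit q (v i) (bsetDepth n k i + 1) := by
  by_cases h : (i : ℕ) = 0 <;> simp [Xfun, bsetDepth, h]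

lemma sum_bsetDepth (n k : ℕ) {d : ℕ} (hd : 0 < d) :
    ∑ i : Fin d, bsetDepth n k i = n - 2 * k := by
  rw [Fintype.sum_eq_single (f := bsetDepth n k) ⟨0, hd⟩ fun i hi =>
    if_neg fun h => hi (Fin.ext h)]
  rfl

theorem stmt18_general (q d n k m : ℕ) (ε : ℝ) (P : Finset (Fin d → ℝ))
    (hq : 2 ≤ q) (hn : 2 * k ≤ n)
    (hP : IsAlmostNet q d n (m : ℝ) ε P)
    (J₁ J₂ : Finset (Fin d)) (hJ₁ : J₁.card = k) (hJ₂ : J₂.card = k) (hne : J₁ ≠ J₂)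
    (τ : ZMod q)
    (Bτ : Set (Fin d → ℝ))
    (hBτ : Bτ = {v ∈ Bset q d n k |
      (∑ j ∈ J₁, ((Xfun q d n k v j : ℕ) : ZMod q))
        - (∑ j ∈ J₂, ((Xfun q d n k v j : ℕ) : ZMod q)) = τ}) :
    (∃ boxes : Fin (q ^ (((J₁ \ J₂) ∪ (J₂ \ J₁)).card - 1)) → Set (Fin d → ℝ),
      (∀ i, IsBasicBox q d (n - 2 * k + ((J₁ \ J₂) ∪ (J₂ \ J₁)).card) (boxes i)) ∧
      (∀ i j, i ≠ j → Disjoint (boxes i) (boxes j)) ∧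
      (⋃ i, boxes i) = Bτ) ∧
    ((q : ℝ) ^ (2 * k - 1) * (1 - ε) * m
        ≤ (((P : Set (Fin d → ℝ)) ∩ Bτ).ncard : ℝ) ∧
      (((P : Set (Fin d → ℝ)) ∩ Bτ).ncard : ℝ)
        ≤ (q : ℝ) ^ (2 * k - 1) * (1 + ε) * m) := by
  have : NeZero q := ⟨by omega⟩
  rw [← sup_eq_union, ← symmDiff_def]
  obtain ⟨p, hp⟩ := symmDiff_nonempty.2 hne
  have hS_pos := card_pos.2 ⟨p, hp⟩
  have hS_le := card_symmDiff_le J₁ J₂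
  obtain ⟨boxes, hbox, hdisj, hunion⟩ := exists_partition_digitCylinder (q := q) (bsetDepth n k)
    (J₁ ∆ J₂) (fun j => if j ∈ J₁ then 1 else -1) hp (by split_ifs <;> simp) τ
  rw [sum_bsetDepth n k p.pos] at hbox
  have hBτ' : ⋃ i, boxes i = Bτ := by
    rw [hunion, hBτ, Bset_eq_univ_pi]
    ext v
    simp [Xfun_eq_qdigit, sum_sub_sum_eq_sum_symmDiff]
  refine ⟨⟨boxes, hbox, hdisj, hBτ'⟩, ?_⟩
  have hbounds := ncard_inter_iUnion_mem_bounds P hdisj fun i =>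
    hP.ncard_inter_mem_bounds (by omega) p (2 * k - (J₁ ∆ J₂).card) (hbox i) (by omega)
  rw [hBτ', Fintype.card_fin, Nat.cast_pow] at hbounds
  have hpow : (q : ℝ) ^ ((J₁ ∆ J₂).card - 1) * (q : ℝ) ^ (2 * k - (J₁ ∆ J₂).card) =
      (q : ℝ) ^ (2 * k - 1) := by
    rw [← pow_add]
    congr 1
    omega
  rw [← hpow]
  constructor <;> linarith [hbounds.1, hbounds.2]

/-- for distinct `k`-subsets `J₁, J₂` and each residue `τ`, the set
`B_τ = {v ∈ 𝓑 : ∑_{j∈J₁} X_j(v) − ∑_{j∈J₂} X_j(v) ≡ τ (mod q)}` partitions into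
`q^(|J₁ Δ J₂|−1)` basic boxes of volume `q^(−n+2k−|J₁ Δ J₂|)`; consequently,
`q^(2k−1)(1−ε)m ≤ |P ∩ B_τ| ≤ q^(2k−1)(1+ε)m`. -/
theorem stmt18 (q d n k m : ℕ) (ε : ℝ) (P : Finset (Fin d → ℝ))
    (hq : 2 ≤ q) (hd : 2 ≤ d) (hk1 : 1 ≤ k) (hk2 : 2 * k ≤ d) (hn : 2 * k ≤ n)
    (hε0 : 0 < ε)
    (hP : IsAlmostNet q d n (m : ℝ) ε P)
    (J₁ J₂ : Finset (Fin d)) (hJ₁ : J₁.card = k) (hJ₂ : J₂.card = k) (hne : J₁ ≠ J₂)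
    (τ : ZMod q)
    (Bτ : Set (Fin d → ℝ))
    (hBτ : Bτ = {v ∈ Bset q d n k |
      (∑ j ∈ J₁, ((Xfun q d n k v j : ℕ) : ZMod q))
        - (∑ j ∈ J₂, ((Xfun q d n k v j : ℕ) : ZMod q)) = τ}) :
    (∃ boxes : Fin (q ^ (((J₁ \ J₂) ∪ (J₂ \ J₁)).card - 1)) → Set (Fin d → ℝ),
      (∀ i, IsBasicBox q d (n - 2 * k + ((J₁ \ J₂) ∪ (J₂ \ J₁)).card) (boxes i)) ∧
      (∀ i j, i ≠ j → Disjoint (boxes i) (boxes j)) ∧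
      (⋃ i, boxes i) = Bτ) ∧
    ((q : ℝ) ^ (2 * k - 1) * (1 - ε) * m
        ≤ (((P : Set (Fin d → ℝ)) ∩ Bτ).ncard : ℝ) ∧
      (((P : Set (Fin d → ℝ)) ∩ Bτ).ncard : ℝ)
        ≤ (q : ℝ) ^ (2 * k - 1) * (1 + ε) * m) :=
  stmt18_general q d n k m ε P hq hn hP J₁ J₂ hJ₁ hJ₂ hne τ Bτ hBτ
end
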